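/- Let L ∈ ZF^{2,m} (m ≥ 3) be a zero-filiform Leibniz superalgebra of nilindex m+2 with an adapted basis {x₁,x₂,y₁,…,y_m} whose generators are x₁ and y₁, and write [y_m,y₁] = β_{m,2} x₂. Then β_{m,2} ≠ 0. -/

import Mathlib

/-- A complex Leibniz superalgebra: a ℤ₂-graded complex vector space `L = L₀ ⊕ L₁`
with a bilinear bracket satisfying `[L_α, L_β] ⊆ L_{α+β}` and the Leibniz
superidentity `[x,[y,z]] = [[x,y],z] − (−1)^{αβ}[[x,z],y]` for homogeneous `y, z`. -/
structure LeibnizSuper (L : Type*) [AddCommGroup L] [Module ℂ L] where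
  bracket : L →ₗ[ℂ] L →ₗ[ℂ] L
  L0 : Submodule ℂ L
  L1 : Submodule ℂ L
  compl : IsCompl L0 L1
  g00 : ∀ y ∈ L0, ∀ z ∈ L0, bracket y z ∈ L0
  g01 : ∀ y ∈ L0, ∀ z ∈ L1, bracket y z ∈ L1
  g10 : ∀ y ∈ L1, ∀ z ∈ L0, bracket y z ∈ L1
  g11 : ∀ y ∈ L1, ∀ z ∈ L1, bracket y z ∈ L0
  leib00 : ∀ x : L, ∀ y ∈ L0, ∀ z ∈ L0,
    bracket x (bracket y z) = bracket (bracket x y) z - bracket (bracket x z) y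
  leib01 : ∀ x : L, ∀ y ∈ L0, ∀ z ∈ L1,
    bracket x (bracket y z) = bracket (bracket x y) z - bracket (bracket x z) y
  leib10 : ∀ x : L, ∀ y ∈ L1, ∀ z ∈ L0,
    bracket x (bracket y z) = bracket (bracket x y) z - bracket (bracket x z) y
  leib11 : ∀ x : L, ∀ y ∈ L1, ∀ z ∈ L1,
    bracket x (bracket y z) = bracket (bracket x y) z + bracket (bracket x z) y

/-- `HasJordanType f ls` : the nilpotent endomorphism `f` has Jordan blocks of sizes
given by the decreasing list `ls` (the number of blocks of size `≥ j+1` equals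
`rank f^j − rank f^{j+1}`). -/
def HasJordanType {V : Type*} [AddCommGroup V] [Module ℂ V] (f : Module.End ℂ V)
    (ls : List ℕ) : Prop :=
  ls.Pairwise (· ≥ ·) ∧ (∀ a ∈ ls, 0 < a) ∧
  ∀ j : ℕ, ls.countP (fun a => decide (j + 1 ≤ a)) =
    Module.finrank ℂ (LinearMap.range (f ^ j)) -
      Module.finrank ℂ (LinearMap.range (f ^ (j + 1)))

namespace LeibnizSuper

variable {L : Type*} [AddCommGroup L] [Module ℂ L] (S : LeibnizSuper L)

/-- The span of all brackets `[a,b]`, `a ∈ p`, `b ∈ q`. -/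
def bracketSpan (p q : Submodule ℂ L) : Submodule ℂ L :=
  Submodule.span ℂ {z | ∃ a ∈ p, ∃ b ∈ q, z = S.bracket a b}

/-- Descending central series; `S.term k` is `L^{k+1}` (so `S.term 0 = L¹ = L`). -/
def term : ℕ → Submodule ℂ L
  | 0 => ⊤
  | k + 1 => S.bracketSpan (term k) ⊤

/-- `S.HasNilindex s` : `s` is the minimal natural number with `L^s = 0`. -/
def HasNilindex (s : ℕ) : Prop :=
  0 < s ∧ S.term (s - 1) = ⊥ ∧ ∀ t : ℕ, t + 1 < s → S.term t ≠ ⊥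

/-- The superalgebra is nilpotent. -/
def IsNilpotentSuper : Prop := ∃ s, S.term s = ⊥

/-- Right multiplication operator `R_x z = [z, x]`. -/
def R (x : L) : Module.End ℂ L := S.bracket.flip x

/-- Restriction of `R_x` (for `x ∈ L₀`) to the even part `L₀`. -/
def R0 (x : L) (hx : x ∈ S.L0) : Module.End ℂ S.L0 :=
  (S.R x).restrict (fun z hz => S.g00 z hz x hx)

/-- Restriction of `R_x` (for `x ∈ L₀`) to the odd part `L₁`. -/
def R1 (x : L) (hx : x ∈ S.L0) : Module.End ℂ S.L1 :=
  (S.R x).restrict (fun z hz => S.g10 z hz x hx)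

/-- `S.HasCharSeq ns ms` : the characteristic sequence of `S` is `(ns | ms)`, i.e.
`ns` (resp. `ms`) is the lexicographically maximal sequence of Jordan block sizes of
`R_x` restricted to `L₀` (resp. `L₁`) over all `x ∈ L₀ ∖ [L₀, L₀]`. -/
def HasCharSeq (ns ms : List ℕ) : Prop :=
  (∃ x, ∃ hx : x ∈ S.L0, x ∉ S.bracketSpan S.L0 S.L0 ∧ HasJordanType (S.R0 x hx) ns) ∧
  (∀ x, ∀ hx : x ∈ S.L0, x ∉ S.bracketSpan S.L0 S.L0 →
    ∀ ls, HasJordanType (S.R0 x hx) ls → ls = ns ∨ List.Lex (· < ·) ls ns) ∧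
  (∃ x, ∃ hx : x ∈ S.L0, x ∉ S.bracketSpan S.L0 S.L0 ∧ HasJordanType (S.R1 x hx) ms) ∧
  (∀ x, ∀ hx : x ∈ S.L0, x ∉ S.bracketSpan S.L0 S.L0 →
    ∀ ls, HasJordanType (S.R1 x hx) ls → ls = ms ∨ List.Lex (· < ·) ls ms)

/-- `S ∈ ZF^{n,m}` : `S` is zero-filiform with `dim L₀ = n`, `dim L₁ = m`. -/
def ZeroFiliform (n m : ℕ) : Prop :=
  Module.finrank ℂ S.L0 = n ∧ Module.finrank ℂ S.L1 = m ∧ S.HasCharSeq [n] [m]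

/-- A graded subalgebra: a submodule closed under the bracket which is the sum of
its intersections with the even and the odd parts. -/
def IsGradedSubalgebra (p : Submodule ℂ L) : Prop :=
  (∀ a ∈ p, ∀ b ∈ p, S.bracket a b ∈ p) ∧ p = p ⊓ S.L0 ⊔ p ⊓ S.L1

/-- `A` generates the superalgebra: the smallest graded subalgebra containing `A` is `L`. -/
def Generates (A : Set L) : Prop :=
  ∀ p : Submodule ℂ L, S.IsGradedSubalgebra p → A ⊆ p → p = ⊤

/-- An adapted basis `{x₁,…,x_n, y₁,…,y_m}` of a zero-filiform Leibniz superalgebra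
(1-based indexing). -/
def IsAdaptedPair (n m : ℕ) (x y : ℕ → L) : Prop :=
  (∀ i, 1 ≤ i → i ≤ n → x i ∈ S.L0) ∧
  (∀ j, 1 ≤ j → j ≤ m → y j ∈ S.L1) ∧
  LinearIndependent ℂ
    (Sum.elim (fun i : Fin n => x ((i : ℕ) + 1)) (fun j : Fin m => y ((j : ℕ) + 1))) ∧
  Submodule.span ℂ (Set.range
    (Sum.elim (fun i : Fin n => x ((i : ℕ) + 1)) (fun j : Fin m => y ((j : ℕ) + 1)))) = ⊤ ∧
  (∀ i, 1 ≤ i → i ≤ n - 1 → S.bracket (x i) (x 1) = x (i + 1)) ∧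
  S.bracket (x n) (x 1) = 0 ∧
  (∀ i k, 1 ≤ i → i ≤ n → 2 ≤ k → k ≤ n → S.bracket (x i) (x k) = 0) ∧
  (∀ j, 1 ≤ j → j ≤ m - 1 → S.bracket (y j) (x 1) = y (j + 1)) ∧
  S.bracket (y m) (x 1) = 0 ∧
  (∀ j k, 1 ≤ j → j ≤ m → 2 ≤ k → k ≤ n → S.bracket (y j) (x k) = 0)

end LeibnizSuper

/-!
Suppose `[y m, y 1] = 0`. No bracket `[y i, y j]` has an `x 1`-component: otherwise, since
`x 2` is a right annihilator, the Leibniz identity makes right multiplication by `x 1` raise the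
index in the descending central series by two, and `y m`, obtained from `y 1` by `m - 1` such
multiplications, would lie in `L^{2m-1} = 0`. So `[L₁, L₁] ⊆ ℂ x 2`, and the Leibniz identity for
`y i, y 1, y 2` leaves two cases: `[x 2, y 1] = 0`, or `[y i, y j] = 0` unless `i = j = 1`.
In either case, weights `1` for `x 1`, `p` for `y p`, and `m` (first case) or `2` (second case)
for `x 2` give a filtration that the bracket raises, which forces `L^{m+1} = 0`, contradicting
the nilindex. The few vanishing coordinates this needs come from `L^{m+2} = 0`.
-/

theorem Disjoint.le_of_le_of_sup_eq_top {α : Type*} [Lattice α] [BoundedOrder α]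
    [IsModularLattice α] {a b c d : α} (hcd : Disjoint c d) (hac : a ≤ c) (hbd : b ≤ d)
    (hab : a ⊔ b = ⊤) : c ≤ a :=
  (eq_of_le_of_inf_le_of_le_sup hac (z := b)
    ((inf_le_inf_left c hbd).trans (hcd.eq_bot.le.trans bot_le)) (hab ▸ le_top)).ge

namespace LeibnizSuper

open Submodule

variable {L : Type*} [AddCommGroup L] [Module ℂ L] (S : LeibnizSuper L)

theorem bracket_mem_term_succ {k : ℕ} {a : L} (ha : a ∈ S.term k) (u : L) :
    S.bracket a u ∈ S.term (k + 1) :=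
  subset_span ⟨a, ha, u, mem_top, rfl⟩

theorem term_succ_le_iff {k : ℕ} {p : Submodule ℂ L} :
    S.term (k + 1) ≤ p ↔ ∀ a ∈ S.term k, ∀ u, S.bracket a u ∈ p :=
  ⟨fun hp a ha u => hp (S.bracket_mem_term_succ ha u),
    fun hp => span_le.2 (by rintro _ ⟨a, ha, u, -, rfl⟩; exact hp a ha u)⟩

theorem term_antitone : Antitone S.term :=
  antitone_nat_of_succ_le fun k => by
    induction k with
    | zero => exact le_top
    | succ k ih => exact S.term_succ_le_iff.2 fun a ha u => S.bracket_mem_term_succ (ih ha) u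

theorem bracket_bracket_mem_term {k : ℕ} {a b c : L} (ha : a ∈ S.term k) (hb : b ∈ S.L1)
    (hc : c ∈ S.L1) : S.bracket a (S.bracket b c) ∈ S.term (k + 2) := by
  rw [S.leib11 a b hb c hc]
  exact add_mem (S.bracket_mem_term_succ (S.bracket_mem_term_succ ha b) c)
    (S.bracket_mem_term_succ (S.bracket_mem_term_succ ha c) b)

theorem term_le_span_of_weight {ι : Type*} (v : ι → L) (hv : span ℂ (Set.range v) = ⊤)
    (w : ι → ℕ) (hw : ∀ i, 0 < w i)
    (hbr : ∀ i j, S.bracket (v i) (v j) ∈ span ℂ (v '' {l | w i < w l})) :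
    ∀ k, S.term k ≤ span ℂ (v '' {l | k < w l})
  | 0 => by simp [hw, term, Set.image_univ, hv]
  | k + 1 => S.term_succ_le_iff.2 fun a ha u => by
    have hau := apply_mem_map₂ S.bracket (term_le_span_of_weight v hv w hw hbr k ha)
      (hv.ge mem_top : u ∈ span ℂ (Set.range v))
    rw [map₂_span_span] at hau
    refine span_le.2 ?_ hau
    rintro _ ⟨_, ⟨i, hi : k < w i, rfl⟩, _, ⟨j, rfl⟩, rfl⟩
    exact span_mono (Set.image_mono fun l (hl : w i < w l) => show k + 1 < w l by omega) (hbr i j)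

theorem term_eq_bot_of_weight_le {ι : Type*} (v : ι → L) (hv : span ℂ (Set.range v) = ⊤)
    (w : ι → ℕ) (hw : ∀ i, 0 < w i)
    (hbr : ∀ i j, S.bracket (v i) (v j) ∈ span ℂ (v '' {l | w i < w l}))
    {k : ℕ} (hk : ∀ i, w i ≤ k) : S.term k = ⊥ := by
  have h := S.term_le_span_of_weight v hv w hw hbr k
  rwa [show {l | k < w l} = ∅ from Set.eq_empty_of_forall_notMem fun l (hl : k < w l) =>
    absurd (hk l) (by omega), Set.image_empty, span_empty, le_bot_iff] at h

end LeibnizSuper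

namespace LeibnizSuper.IsAdaptedPair

open Module Submodule

variable {L : Type*} [AddCommGroup L] [Module ℂ L] {S : LeibnizSuper L} {n m : ℕ} {x y : ℕ → L}

noncomputable def basis (h : S.IsAdaptedPair n m x y) : Basis (Fin n ⊕ Fin m) ℂ L :=
  .mk h.2.2.1 h.2.2.2.1.ge

theorem basis_inl (h : S.IsAdaptedPair n m x y) (i : Fin n) : h.basis (.inl i) = x (i + 1) :=
  Basis.mk_apply ..

theorem basis_inr (h : S.IsAdaptedPair n m x y) (q : Fin m) : h.basis (.inr q) = y (q + 1) :=
  Basis.mk_apply ..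

-- Indexed from `1` like `x` and `y`, and zero for indices out of range.
noncomputable def coordX (h : S.IsAdaptedPair n m x y) (i : ℕ) : L →ₗ[ℂ] ℂ :=
  if hi : 1 ≤ i ∧ i ≤ n then h.basis.coord (.inl ⟨i - 1, by omega⟩) else 0

noncomputable def coordY (h : S.IsAdaptedPair n m x y) (p : ℕ) : L →ₗ[ℂ] ℂ :=
  if hp : 1 ≤ p ∧ p ≤ m then h.basis.coord (.inr ⟨p - 1, by omega⟩) else 0

theorem x_eq_basis (h : S.IsAdaptedPair n m x y) {i : ℕ} (hi : 1 ≤ i) (hin : i ≤ n) :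
    x i = h.basis (.inl ⟨i - 1, by omega⟩) := by
  rw [basis_inl]; exact congrArg x (Nat.sub_add_cancel hi).symm

theorem y_eq_basis (h : S.IsAdaptedPair n m x y) {q : ℕ} (hq : 1 ≤ q) (hqm : q ≤ m) :
    y q = h.basis (.inr ⟨q - 1, by omega⟩) := by
  rw [basis_inr]; exact congrArg y (Nat.sub_add_cancel hq).symm

theorem y_mem_L1 (h : S.IsAdaptedPair n m x y) {q : ℕ} (hq : 1 ≤ q) (hqm : q ≤ m) :
    y q ∈ S.L1 :=
  h.2.1 q hq hqm

theorem y_ne_zero (h : S.IsAdaptedPair n m x y) {q : ℕ} (hq : 1 ≤ q) (hqm : q ≤ m) : y q ≠ 0 :=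
  h.y_eq_basis hq hqm ▸ h.basis.ne_zero _

theorem repr_inl (h : S.IsAdaptedPair n m x y) (v : L) (i : Fin n) :
    h.basis.repr v (.inl i) = h.coordX (i + 1) v := by
  rw [coordX, dif_pos (by omega), Basis.coord_apply]
  rfl

theorem repr_inr (h : S.IsAdaptedPair n m x y) (v : L) (q : Fin m) :
    h.basis.repr v (.inr q) = h.coordY (q + 1) v := by
  rw [coordY, dif_pos (by omega), Basis.coord_apply]
  rfl

theorem coordX_x (h : S.IsAdaptedPair n m x y) (i : ℕ) {j : ℕ} (hj : 1 ≤ j) (hjn : j ≤ n) :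
    h.coordX i (x j) = if i = j then 1 else 0 := by
  by_cases hi : 1 ≤ i ∧ i ≤ n
  · rw [coordX, dif_pos hi, h.x_eq_basis hj hjn, Basis.coord_apply, Basis.repr_self_apply]
    exact if_congr (by simp only [Sum.inl.injEq, Fin.mk.injEq]; omega) rfl rfl
  · rw [coordX, dif_neg hi, LinearMap.zero_apply, if_neg (by omega)]

theorem coordX_y (h : S.IsAdaptedPair n m x y) (i : ℕ) {q : ℕ} (hq : 1 ≤ q) (hqm : q ≤ m) :
    h.coordX i (y q) = 0 := by
  by_cases hi : 1 ≤ i ∧ i ≤ n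
  · rw [coordX, dif_pos hi, h.y_eq_basis hq hqm, Basis.coord_apply, Basis.repr_self_apply,
      if_neg Sum.inr_ne_inl]
  · rw [coordX, dif_neg hi, LinearMap.zero_apply]

theorem coordY_x (h : S.IsAdaptedPair n m x y) (p : ℕ) {i : ℕ} (hi : 1 ≤ i) (hin : i ≤ n) :
    h.coordY p (x i) = 0 := by
  by_cases hp : 1 ≤ p ∧ p ≤ m
  · rw [coordY, dif_pos hp, h.x_eq_basis hi hin, Basis.coord_apply, Basis.repr_self_apply,
      if_neg Sum.inl_ne_inr]
  · rw [coordY, dif_neg hp, LinearMap.zero_apply]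

theorem coordY_y (h : S.IsAdaptedPair n m x y) (p : ℕ) {q : ℕ} (hq : 1 ≤ q) (hqm : q ≤ m) :
    h.coordY p (y q) = if p = q then 1 else 0 := by
  by_cases hp : 1 ≤ p ∧ p ≤ m
  · rw [coordY, dif_pos hp, h.y_eq_basis hq hqm, Basis.coord_apply, Basis.repr_self_apply]
    exact if_congr (by simp only [Sum.inr.injEq, Fin.mk.injEq]; omega) rfl rfl
  · rw [coordY, dif_neg hp, LinearMap.zero_apply, if_neg (by omega)]

theorem linearMap_ext (h : S.IsAdaptedPair n m x y) {M : Type*} [AddCommGroup M] [Module ℂ M]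
    {f g : L →ₗ[ℂ] M} (hx : ∀ i, 1 ≤ i → i ≤ n → f (x i) = g (x i))
    (hy : ∀ q, 1 ≤ q → q ≤ m → f (y q) = g (y q)) : f = g :=
  h.basis.ext fun
    | .inl i => by simpa [basis_inl] using hx (i + 1) (by omega) (by omega)
    | .inr q => by simpa [basis_inr] using hy (q + 1) (by omega) (by omega)

theorem ext_elem (h : S.IsAdaptedPair n m x y) {v v' : L}
    (hx : ∀ i, 1 ≤ i → i ≤ n → h.coordX i v = h.coordX i v')
    (hy : ∀ q, 1 ≤ q → q ≤ m → h.coordY q v = h.coordY q v') : v = v' :=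
  h.basis.ext_elem_iff.2 fun
    | .inl i => by simpa [repr_inl] using hx (i + 1) (by omega) (by omega)
    | .inr q => by simpa [repr_inr] using hy (q + 1) (by omega) (by omega)

theorem L0_le_span (h : S.IsAdaptedPair n m x y) :
    S.L0 ≤ span ℂ (Set.range fun i : Fin n => x (i + 1)) :=
  S.compl.disjoint.le_of_le_of_sup_eq_top
    (span_le.2 <| Set.range_subset_iff.2 fun i : Fin n => h.1 (i + 1) (by omega) (by omega))
    (span_le.2 <| Set.range_subset_iff.2 fun q : Fin m => h.2.1 (q + 1) (by omega) (by omega))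
    (by rw [← span_union, ← Set.Sum.elim_range, h.2.2.2.1])

theorem L1_le_span (h : S.IsAdaptedPair n m x y) :
    S.L1 ≤ span ℂ (Set.range fun q : Fin m => y (q + 1)) :=
  S.compl.disjoint.symm.le_of_le_of_sup_eq_top
    (span_le.2 <| Set.range_subset_iff.2 fun q : Fin m => h.2.1 (q + 1) (by omega) (by omega))
    (span_le.2 <| Set.range_subset_iff.2 fun i : Fin n => h.1 (i + 1) (by omega) (by omega))
    (by rw [← span_union, Set.union_comm, ← Set.Sum.elim_range, h.2.2.2.1])

theorem coordY_eq_zero_of_mem_L0 (h : S.IsAdaptedPair n m x y) (p : ℕ) {v : L}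
    (hv : v ∈ S.L0) : h.coordY p v = 0 :=
  (span_le (p := LinearMap.ker (h.coordY p)) |>.2
    (Set.range_subset_iff.2 fun i => h.coordY_x p (by omega) (by omega))) (h.L0_le_span hv)

theorem coordX_eq_zero_of_mem_L1 (h : S.IsAdaptedPair n m x y) (i : ℕ) {v : L}
    (hv : v ∈ S.L1) : h.coordX i v = 0 :=
  (span_le (p := LinearMap.ker (h.coordX i)) |>.2
    (Set.range_subset_iff.2 fun q => h.coordX_y i (by omega) (by omega))) (h.L1_le_span hv)

theorem eq_sum_of_mem_L1 (h : S.IsAdaptedPair n m x y) {w : L} (hw : w ∈ S.L1) :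
    w = ∑ q ∈ Finset.range m, h.coordY (q + 1) w • y (q + 1) := by
  conv_lhs => rw [← h.basis.sum_repr w]
  rw [Fintype.sum_sum_type, Finset.sum_eq_zero fun i _ => ?_, zero_add,
    ← Fin.sum_univ_eq_sum_range fun q => h.coordY (q + 1) w • y (q + 1)]
  · simp [basis_inr, repr_inr]
  · rw [repr_inl, h.coordX_eq_zero_of_mem_L1 _ hw, zero_smul]

theorem bracket_eq_sum_of_mem_L1 (h : S.IsAdaptedPair n m x y) (u : L) {w : L}
    (hw : w ∈ S.L1) :
    S.bracket u w = ∑ q ∈ Finset.range m, h.coordY (q + 1) w • S.bracket u (y (q + 1)) := by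
  conv_lhs => rw [h.eq_sum_of_mem_L1 hw]
  simp only [map_sum, map_smul]

theorem x_one_mem_L0 (h : S.IsAdaptedPair 2 m x y) : x 1 ∈ S.L0 := h.1 1 le_rfl one_le_two

theorem x_two_mem_L0 (h : S.IsAdaptedPair 2 m x y) : x 2 ∈ S.L0 := h.1 2 one_le_two le_rfl

theorem bracket_x_one_x_one (h : S.IsAdaptedPair 2 m x y) : S.bracket (x 1) (x 1) = x 2 :=
  h.2.2.2.2.1 1 le_rfl le_rfl

theorem bracket_x_two_x_one (h : S.IsAdaptedPair 2 m x y) : S.bracket (x 2) (x 1) = 0 :=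
  h.2.2.2.2.2.1

theorem bracket_y_x_one (h : S.IsAdaptedPair 2 m x y) {j : ℕ} (hj : 1 ≤ j) (hjm : j < m) :
    S.bracket (y j) (x 1) = y (j + 1) :=
  h.2.2.2.2.2.2.2.1 j hj (by omega)

theorem bracket_y_m_x_one (h : S.IsAdaptedPair 2 m x y) : S.bracket (y m) (x 1) = 0 :=
  h.2.2.2.2.2.2.2.2.1

theorem bracket_x_two (h : S.IsAdaptedPair 2 m x y) (v : L) : S.bracket v (x 2) = 0 :=
  LinearMap.congr_fun (h.linearMap_ext (f := S.bracket.flip (x 2)) (g := 0)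
    (fun i hi hi2 => h.2.2.2.2.2.2.1 i 2 hi hi2 le_rfl le_rfl)
    (fun q hq hqm => h.2.2.2.2.2.2.2.2.2 q 2 hq hqm le_rfl le_rfl)) v

theorem x_two_mem_term_one (h : S.IsAdaptedPair 2 m x y) : x 2 ∈ S.term 1 :=
  h.bracket_x_one_x_one ▸ S.bracket_mem_term_succ (mem_top : x 1 ∈ S.term 0) (x 1)

theorem eq_smul_x_one_add_smul_x_two_of_mem_L0 (h : S.IsAdaptedPair 2 m x y) {v : L}
    (hv : v ∈ S.L0) :
    v = h.coordX 1 v • x 1 + h.coordX 2 v • x 2 :=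
  h.ext_elem (fun i hi hi2 => by interval_cases i <;> simp [h.coordX_x])
    (fun q _ _ => by simp [h.coordY_eq_zero_of_mem_L0 _ hv, h.coordY_x])

theorem bracket_of_mem_L0 (h : S.IsAdaptedPair 2 m x y) (u : L) {v : L} (hv : v ∈ S.L0) :
    S.bracket u v = h.coordX 1 v • S.bracket u (x 1) := by
  conv_lhs => rw [h.eq_smul_x_one_add_smul_x_two_of_mem_L0 hv]
  simp [h.bracket_x_two]

theorem bracket_x_one_of_mem_L0 (h : S.IsAdaptedPair 2 m x y) {v : L} (hv : v ∈ S.L0) :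
    S.bracket v (x 1) = h.coordX 1 v • x 2 := by
  conv_lhs => rw [h.eq_smul_x_one_add_smul_x_two_of_mem_L0 hv]
  simp [h.bracket_x_one_x_one, h.bracket_x_two_x_one]

theorem coordY_succ_bracket_x_one (h : S.IsAdaptedPair 2 m x y) (v : L) {p : ℕ} (hp : p < m) :
    h.coordY (p + 1) (S.bracket v (x 1)) = h.coordY p v :=
  LinearMap.congr_fun (h.linearMap_ext (f := (h.coordY (p + 1)).comp (S.bracket.flip (x 1)))
    (g := h.coordY p)
    (fun i hi hi2 => by
      interval_cases i <;> simp [h.bracket_x_one_x_one, h.bracket_x_two_x_one, h.coordY_x])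
    (fun q hq hqm => by
      rcases hqm.lt_or_eq with hqm | rfl
      · rw [LinearMap.comp_apply, LinearMap.flip_apply, h.bracket_y_x_one hq hqm,
          h.coordY_y _ (by omega) hqm, h.coordY_y _ hq hqm.le]
        simp
      · rw [LinearMap.comp_apply, LinearMap.flip_apply, h.bracket_y_m_x_one, map_zero,
          h.coordY_y _ hq le_rfl, if_neg hp.ne])) v

theorem coordY_one_bracket_x_one_eq_zero (h : S.IsAdaptedPair 2 m x y) (hm : 1 ≤ m) (v : L) :
    h.coordY 1 (S.bracket v (x 1)) = 0 :=
  h.coordY_succ_bracket_x_one v hm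

theorem coordY_eq_zero_of_mem_term (h : S.IsAdaptedPair 2 m x y) (hnil : S.term (m + 1) = ⊥)
    {t : ℕ} (ht : t ≤ m + 1) {v : L} (hv : v ∈ S.term t) {p : ℕ} (hp : p < t) :
    h.coordY p v = 0 := by
  obtain ⟨r, hr⟩ : ∃ r, t + r = m + 1 := ⟨m + 1 - t, by omega⟩
  clear ht
  induction r generalizing t v p with
  | zero =>
    rw [add_zero] at hr
    rw [hr, hnil, mem_bot] at hv
    rw [hv, map_zero]
  | succ r ih =>
    rw [← h.coordY_succ_bracket_x_one v (by omega)]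
    exact ih (S.bracket_mem_term_succ hv _) (by omega) (by omega)

theorem bracket_x_one_y_succ (h : S.IsAdaptedPair 2 m x y) {j : ℕ} (hj : 1 ≤ j) (hjm : j < m) :
    S.bracket (x 1) (y (j + 1)) =
      S.bracket (S.bracket (x 1) (y j)) (x 1) - S.bracket (x 2) (y j) := by
  have := S.leib10 (x 1) (y j) (h.y_mem_L1 hj hjm.le) (x 1) h.x_one_mem_L0
  rwa [h.bracket_y_x_one hj hjm, h.bracket_x_one_x_one] at this

theorem bracket_x_two_y_succ (h : S.IsAdaptedPair 2 m x y) {j : ℕ} (hj : 1 ≤ j) (hjm : j < m) :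
    S.bracket (x 2) (y (j + 1)) = S.bracket (S.bracket (x 2) (y j)) (x 1) := by
  have := S.leib10 (x 2) (y j) (h.y_mem_L1 hj hjm.le) (x 1) h.x_one_mem_L0
  rwa [h.bracket_y_x_one hj hjm, h.bracket_x_two_x_one, map_zero, LinearMap.zero_apply,
    sub_zero] at this

theorem bracket_x_one_bracket_x_one_y (h : S.IsAdaptedPair 2 m x y) {j : ℕ} (hj : 1 ≤ j)
    (hjm : j ≤ m) :
    S.bracket (x 1) (S.bracket (x 1) (y j)) =
      S.bracket (x 2) (y j) - S.bracket (S.bracket (x 1) (y j)) (x 1) := by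
  have := S.leib01 (x 1) (x 1) h.x_one_mem_L0 (y j) (h.y_mem_L1 hj hjm)
  rwa [h.bracket_x_one_x_one] at this

theorem bracket_x_one_bracket_x_two_y (h : S.IsAdaptedPair 2 m x y) {j : ℕ} (hj : 1 ≤ j)
    (hjm : j ≤ m) : S.bracket (x 1) (S.bracket (x 2) (y j)) = 0 := by
  have := S.leib01 (x 1) (x 2) h.x_two_mem_L0 (y j) (h.y_mem_L1 hj hjm)
  rwa [h.bracket_x_two, h.bracket_x_two, map_zero, LinearMap.zero_apply, sub_zero] at this

theorem bracket_y_y_succ (h : S.IsAdaptedPair 2 m x y) (i : ℕ) {j : ℕ} (hj : 1 ≤ j)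
    (hjm : j < m) :
    S.bracket (y i) (y (j + 1)) =
      S.bracket (S.bracket (y i) (y j)) (x 1) - S.bracket (S.bracket (y i) (x 1)) (y j) := by
  have := S.leib10 (y i) (y j) (h.y_mem_L1 hj hjm.le) (x 1) h.x_one_mem_L0
  rwa [h.bracket_y_x_one hj hjm] at this

theorem coordY_one_bracket_x_two_y_eq_zero (h : S.IsAdaptedPair 2 m x y) (hnil : S.term (m + 1) = ⊥)
    (hm : 1 ≤ m) (j : ℕ) : h.coordY 1 (S.bracket (x 2) (y j)) = 0 :=
  h.coordY_eq_zero_of_mem_term hnil (by omega)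
    (S.bracket_mem_term_succ h.x_two_mem_term_one (y j)) one_lt_two

theorem coordY_one_bracket_x_one_y_succ_eq_zero (h : S.IsAdaptedPair 2 m x y)
    (hnil : S.term (m + 1) = ⊥) {j : ℕ} (hj : 1 ≤ j) (hjm : j < m) :
    h.coordY 1 (S.bracket (x 1) (y (j + 1))) = 0 := by
  rw [h.bracket_x_one_y_succ hj hjm, map_sub, h.coordY_one_bracket_x_one_eq_zero (by omega),
    h.coordY_one_bracket_x_two_y_eq_zero hnil (by omega), sub_zero]

theorem coordY_one_bracket_x_one_y_eq_zero (h : S.IsAdaptedPair 2 m x y)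
    (hnil : S.term (m + 1) = ⊥) {j : ℕ} (hj : 1 ≤ j) (hjm : j ≤ m) :
    h.coordY 1 (S.bracket (x 1) (y j)) = 0 := by
  obtain rfl | hj := hj.eq_or_lt
  · -- the `y 1`-coordinate of `[x 1, [x 1, y 1]]` is the square of that of `[x 1, y 1]`
    have key := congrArg (h.coordY 1) (h.bracket_x_one_bracket_x_one_y le_rfl hjm)
    rw [h.bracket_eq_sum_of_mem_L1 _ (S.g01 _ h.x_one_mem_L0 _ (h.y_mem_L1 le_rfl hjm)),
      map_sum, map_sub, h.coordY_one_bracket_x_one_eq_zero hjm,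
      h.coordY_one_bracket_x_two_y_eq_zero hnil hjm, sub_zero, Finset.sum_eq_single 0] at key
    · simpa using key
    · intro q hq hq0
      rw [map_smul, smul_eq_mul, h.coordY_one_bracket_x_one_y_succ_eq_zero hnil (by omega)
        (Finset.mem_range.1 hq), mul_zero]
    · intro h0
      exact absurd (Finset.mem_range.2 (by omega)) h0
  · obtain ⟨k, rfl⟩ : ∃ k, j = k + 1 := ⟨j - 1, by omega⟩
    exact h.coordY_one_bracket_x_one_y_succ_eq_zero hnil (by omega) hjm

theorem coordY_two_bracket_x_two_y_succ_eq_zero (h : S.IsAdaptedPair 2 m x y)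
    (hnil : S.term (m + 1) = ⊥) {j : ℕ} (hj : 1 ≤ j) (hjm : j < m) :
    h.coordY 2 (S.bracket (x 2) (y (j + 1))) = 0 := by
  rw [h.bracket_x_two_y_succ hj hjm, h.coordY_succ_bracket_x_one (p := 1) _ (by omega),
    h.coordY_one_bracket_x_two_y_eq_zero hnil (by omega)]

theorem coordY_two_bracket_x_one_y_succ (h : S.IsAdaptedPair 2 m x y) {j : ℕ} (hj : 1 ≤ j)
    (hjm : j < m) :
    h.coordY 2 (S.bracket (x 1) (y (j + 1))) =
      h.coordY 1 (S.bracket (x 1) (y j)) - h.coordY 2 (S.bracket (x 2) (y j)) := by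
  rw [h.bracket_x_one_y_succ hj hjm, map_sub, h.coordY_succ_bracket_x_one (p := 1) _ (by omega)]

theorem coordY_two_bracket_x_two_y_eq_zero (h : S.IsAdaptedPair 2 m x y)
    (hnil : S.term (m + 1) = ⊥) (hm : 2 ≤ m) {j : ℕ} (hj : 1 ≤ j) (hjm : j ≤ m) :
    h.coordY 2 (S.bracket (x 2) (y j)) = 0 := by
  obtain rfl | hj := hj.eq_or_lt
  · -- the `y 2`-coordinate of `[x 1, [x 2, y 1]] = 0` is minus the square of that of `[x 2, y 1]`
    have key := congrArg (h.coordY 2) (h.bracket_x_one_bracket_x_two_y le_rfl hjm)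
    rw [h.bracket_eq_sum_of_mem_L1 _ (S.g01 _ h.x_two_mem_L0 _ (h.y_mem_L1 le_rfl hjm)),
      map_sum, map_zero, Finset.sum_eq_single 1] at key
    · rw [map_smul, h.coordY_two_bracket_x_one_y_succ le_rfl hm,
        h.coordY_one_bracket_x_one_y_eq_zero hnil le_rfl hjm, zero_sub, smul_eq_mul, mul_neg,
        neg_eq_zero] at key
      exact mul_self_eq_zero.1 key
    · intro q hq hq1
      obtain rfl | hq0 := Nat.eq_zero_or_pos q
      · rw [map_smul, h.coordY_one_bracket_x_two_y_eq_zero hnil hjm, zero_smul]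
      obtain ⟨k, rfl⟩ : ∃ k, q = k + 1 := ⟨q - 1, by omega⟩
      have hk := Finset.mem_range.1 hq
      rw [map_smul, h.coordY_two_bracket_x_one_y_succ (by omega) (by omega),
        h.coordY_one_bracket_x_one_y_eq_zero hnil (by omega) (by omega),
        h.coordY_two_bracket_x_two_y_succ_eq_zero hnil (by omega) (by omega), sub_zero,
        smul_zero]
    · intro h1
      exact absurd (Finset.mem_range.2 (by omega)) h1
  · obtain ⟨k, rfl⟩ : ∃ k, j = k + 1 := ⟨j - 1, by omega⟩
    exact h.coordY_two_bracket_x_two_y_succ_eq_zero hnil (by omega) hjm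

theorem bracket_y_y_mem_L0 (h : S.IsAdaptedPair 2 m x y) {i j : ℕ} (hi : 1 ≤ i) (him : i ≤ m)
    (hj : 1 ≤ j) (hjm : j ≤ m) : S.bracket (y i) (y j) ∈ S.L0 :=
  S.g11 _ (h.y_mem_L1 hi him) _ (h.y_mem_L1 hj hjm)

theorem bracket_x_one_mem_term_add_two (h : S.IsAdaptedPair 2 m x y) {i j : ℕ} (hi : 1 ≤ i)
    (him : i ≤ m) (hj : 1 ≤ j) (hjm : j ≤ m) (hne : h.coordX 1 (S.bracket (y i) (y j)) ≠ 0)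
    {k : ℕ} {a : L} (ha : a ∈ S.term k) : S.bracket a (x 1) ∈ S.term (k + 2) := by
  have key := S.bracket_bracket_mem_term ha (h.y_mem_L1 hi him) (h.y_mem_L1 hj hjm)
  rwa [h.bracket_of_mem_L0 a (h.bracket_y_y_mem_L0 hi him hj hjm), smul_mem_iff _ hne] at key

theorem y_mem_term_of_bracket_x_one_mem (h : S.IsAdaptedPair 2 m x y)
    (hx : ∀ k a, a ∈ S.term k → S.bracket a (x 1) ∈ S.term (k + 2)) :
    ∀ p, 1 ≤ p → p ≤ m → y p ∈ S.term (2 * (p - 1))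
  | 0, hp, _ => absurd hp (by omega)
  | 1, _, _ => mem_top
  | p + 2, _, hpm => by
    rw [← h.bracket_y_x_one (by omega) (by omega)]
    exact hx _ _ (y_mem_term_of_bracket_x_one_mem h hx (p + 1) (by omega) (by omega))

theorem coordX_one_bracket_y_y_eq_zero (h : S.IsAdaptedPair 2 m x y) (hm : 3 ≤ m)
    (hnil : S.term (m + 1) = ⊥) {i j : ℕ} (hi : 1 ≤ i) (him : i ≤ m) (hj : 1 ≤ j)
    (hjm : j ≤ m) : h.coordX 1 (S.bracket (y i) (y j)) = 0 := by
  by_contra hne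
  have hym := h.y_mem_term_of_bracket_x_one_mem
    (fun _ _ => h.bracket_x_one_mem_term_add_two hi him hj hjm hne) m (by omega) le_rfl
  have hym' := S.term_antitone (show m + 1 ≤ 2 * (m - 1) by omega) hym
  rw [hnil, mem_bot] at hym'
  exact h.y_ne_zero (by omega) le_rfl hym'

theorem bracket_y_y_eq_smul_x_two (h : S.IsAdaptedPair 2 m x y)
    (hyy : ∀ i j, 1 ≤ i → i ≤ m → 1 ≤ j → j ≤ m → h.coordX 1 (S.bracket (y i) (y j)) = 0)
    {i j : ℕ} (hi : 1 ≤ i) (him : i ≤ m) (hj : 1 ≤ j)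
    (hjm : j ≤ m) : S.bracket (y i) (y j) = h.coordX 2 (S.bracket (y i) (y j)) • x 2 := by
  conv_lhs => rw [h.eq_smul_x_one_add_smul_x_two_of_mem_L0 (h.bracket_y_y_mem_L0 hi him hj hjm)]
  rw [hyy i j hi him hj hjm, zero_smul, zero_add]

theorem bracket_y_y_succ_eq_neg (h : S.IsAdaptedPair 2 m x y)
    (hyy : ∀ i j, 1 ≤ i → i ≤ m → 1 ≤ j → j ≤ m → h.coordX 1 (S.bracket (y i) (y j)) = 0)
    {i j : ℕ} (hi : 1 ≤ i) (him : i ≤ m) (hj : 1 ≤ j)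
    (hjm : j < m) :
    S.bracket (y i) (y (j + 1)) = -S.bracket (S.bracket (y i) (x 1)) (y j) := by
  rw [h.bracket_y_y_succ i hj hjm,
    h.bracket_x_one_of_mem_L0 (h.bracket_y_y_mem_L0 hi him hj hjm.le), hyy i j hi him hj hjm.le,
    zero_smul, zero_sub]

theorem bracket_y_m_y_eq_zero (h : S.IsAdaptedPair 2 m x y)
    (hyy : ∀ i j, 1 ≤ i → i ≤ m → 1 ≤ j → j ≤ m → h.coordX 1 (S.bracket (y i) (y j)) = 0)
    (hb : S.bracket (y m) (y 1) = 0) {j : ℕ} (hj : 1 ≤ j) (hjm : j ≤ m) :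
    S.bracket (y m) (y j) = 0 := by
  obtain rfl | hj := hj.eq_or_lt
  · exact hb
  obtain ⟨k, rfl⟩ : ∃ k, j = k + 1 := ⟨j - 1, by omega⟩
  rw [h.bracket_y_y_succ_eq_neg hyy (by omega) le_rfl (by omega) hjm, h.bracket_y_m_x_one,
    map_zero, LinearMap.zero_apply, neg_zero]

theorem coordX_two_smul_bracket_x_two_y_two (h : S.IsAdaptedPair 2 m x y)
    (hyy : ∀ i j, 1 ≤ i → i ≤ m → 1 ≤ j → j ≤ m → h.coordX 1 (S.bracket (y i) (y j)) = 0)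
    {i : ℕ} (hi : 1 ≤ i) (him : i < m) :
    h.coordX 2 (S.bracket (y i) (y 1)) • S.bracket (x 2) (y 2) =
      h.coordX 2 (S.bracket (y (i + 1)) (y 1)) • S.bracket (x 2) (y 1) := by
  have key := S.leib11 (y i) (y 1) (h.y_mem_L1 le_rfl (by omega)) (y 2)
    (h.y_mem_L1 (by omega) (by omega))
  have hi2 : S.bracket (y i) (y 2) = -S.bracket (y (i + 1)) (y 1) := by
    rw [h.bracket_y_y_succ_eq_neg hyy (j := 1) hi him.le le_rfl (by omega),
      h.bracket_y_x_one hi him]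
  rw [h.bracket_of_mem_L0 _ (h.bracket_y_y_mem_L0 le_rfl (by omega) (by omega) (by omega : 2 ≤ m)),
    hyy 1 2 le_rfl (by omega) (by omega) (by omega), zero_smul, hi2,
    h.bracket_y_y_eq_smul_x_two hyy hi him.le le_rfl (by omega),
    h.bracket_y_y_eq_smul_x_two hyy (i := i + 1) (by omega) him le_rfl (by omega)] at key
  simp only [map_smul, map_neg, LinearMap.smul_apply, LinearMap.neg_apply] at key
  exact add_neg_eq_zero.1 key.symm

theorem bracket_x_two_y_one_eq_zero_or (h : S.IsAdaptedPair 2 m x y)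
    (hyy : ∀ i j, 1 ≤ i → i ≤ m → 1 ≤ j → j ≤ m → h.coordX 1 (S.bracket (y i) (y j)) = 0)
    (hb : S.bracket (y m) (y 1) = 0) :
    S.bracket (x 2) (y 1) = 0 ∨ ∀ s, 2 ≤ s → s ≤ m → S.bracket (y s) (y 1) = 0 := by
  classical
  by_contra! hcon
  obtain ⟨hd, s, hs, hsm, hys⟩ := hcon
  let P s := S.bracket (y s) (y 1) ≠ 0
  set l := Nat.findGreatest P m
  have hsl : s ≤ l := Nat.le_findGreatest hsm hys
  have hl : P l := Nat.findGreatest_spec hsm hys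
  have hlm : l < m := (Nat.findGreatest_le m).lt_of_ne fun e : l = m => hl (by rw [e]; exact hb)
  have hl1 : S.bracket (y (l + 1)) (y 1) = 0 :=
    not_not.1 (Nat.findGreatest_is_greatest l.lt_succ_self hlm)
  have hBl : h.coordX 2 (S.bracket (y l) (y 1)) ≠ 0 := fun h0 => hl <| by
    rw [h.bracket_y_y_eq_smul_x_two hyy (by omega) hlm.le le_rfl (by omega), h0, zero_smul]
  have hd2 := h.coordX_two_smul_bracket_x_two_y_two hyy (i := l) (by omega) hlm
  rw [hl1, map_zero, zero_smul, smul_eq_zero] at hd2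
  have hd1 := h.coordX_two_smul_bracket_x_two_y_two hyy (i := l - 1) (by omega) (by omega)
  rw [Nat.sub_add_cancel (by omega), hd2.resolve_left hBl, smul_zero, eq_comm,
    smul_eq_zero] at hd1
  exact hd (hd1.resolve_left hBl)

theorem bracket_x_two_y_eq_zero (h : S.IsAdaptedPair 2 m x y) (hd : S.bracket (x 2) (y 1) = 0) :
    ∀ j, 1 ≤ j → j ≤ m → S.bracket (x 2) (y j) = 0
  | 0, hj, _ => absurd hj (by omega)
  | 1, _, _ => hd
  | j + 2, _, hjm => by
    rw [h.bracket_x_two_y_succ (by omega) (by omega),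
      bracket_x_two_y_eq_zero h hd (j + 1) (by omega) (by omega), map_zero, LinearMap.zero_apply]

theorem bracket_y_y_eq_zero_of_two_le (h : S.IsAdaptedPair 2 m x y)
    (hyy : ∀ i j, 1 ≤ i → i ≤ m → 1 ≤ j → j ≤ m → h.coordX 1 (S.bracket (y i) (y j)) = 0)
    (hB : ∀ s, 2 ≤ s → s ≤ m → S.bracket (y s) (y 1) = 0) :
    ∀ j, 1 ≤ j → j ≤ m → ∀ i, 2 ≤ i → i ≤ m → S.bracket (y i) (y j) = 0
  | 0, hj, _, _, _, _ => absurd hj (by omega)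
  | 1, _, _, i, hi, him => hB i hi him
  | j + 2, _, hjm, i, hi, him => by
    rw [h.bracket_y_y_succ_eq_neg hyy (by omega) him (by omega) (by omega)]
    obtain him | rfl := him.lt_or_eq
    · rw [h.bracket_y_x_one (by omega) him,
        bracket_y_y_eq_zero_of_two_le h hyy hB (j + 1) (by omega) (by omega) (i + 1) (by omega) him,
        neg_zero]
    · rw [h.bracket_y_m_x_one, map_zero, LinearMap.zero_apply, neg_zero]

-- `x 1`, `x 2` and `y p` get the weights `1`, `ω` and `p`.
def weight (m ω : ℕ) : Fin 2 ⊕ Fin m → ℕ := Sum.elim ![1, ω] fun q => q + 1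

theorem mem_span_weight_of_mem_L1 (h : S.IsAdaptedPair 2 m x y) {ω k : ℕ} {v : L}
    (hv : v ∈ S.L1) (hy : ∀ p, 1 ≤ p → p ≤ k → h.coordY p v = 0) :
    v ∈ span ℂ (h.basis '' {l | k < weight m ω l}) := by
  refine h.basis.mem_span_image.2 fun l hl => show k < weight m ω l from
    not_le.1 fun hlk => Finsupp.mem_support_iff.1 hl ?_
  rcases l with i | q
  · rw [h.repr_inl, h.coordX_eq_zero_of_mem_L1 _ hv]
  · rw [h.repr_inr]
    exact hy _ (by omega) hlk

theorem bracket_basis_mem_span_weight (h : S.IsAdaptedPair 2 m x y) {ω : ℕ} (hω : 2 ≤ ω)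
    (hyy : ∀ i j, 1 ≤ i → i ≤ m → 1 ≤ j → j ≤ m → h.coordX 1 (S.bracket (y i) (y j)) = 0)
    (hc : ∀ j, 1 ≤ j → j ≤ m → h.coordY 1 (S.bracket (x 1) (y j)) = 0)
    (hd : ∀ j, 1 ≤ j → j ≤ m → ∀ p ≤ ω, h.coordY p (S.bracket (x 2) (y j)) = 0)
    (hM : ∀ i j, ω ≤ i → i ≤ m → 1 ≤ j → j ≤ m → S.bracket (y i) (y j) = 0)
    (i j : Fin 2 ⊕ Fin m) :
    S.bracket (h.basis i) (h.basis j) ∈ span ℂ (h.basis '' {l | weight m ω i < weight m ω l}) := by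
  let F k := span ℂ (h.basis '' {l | k < weight m ω l})
  have x_two_mem {k : ℕ} (hk : k < ω) : x 2 ∈ F k := subset_span ⟨.inl 1, hk, h.basis_inl 1⟩
  rcases i with i | p <;> rcases j with j | q <;> simp only [h.basis_inl, h.basis_inr]
  · fin_cases i <;> fin_cases j <;>
      simp only [Fin.zero_eta, Fin.mk_one, Fin.isValue, zero_add, Nat.reduceAdd,
        h.bracket_x_one_x_one, h.bracket_x_two_x_one, h.bracket_x_two, zero_mem]
    exact x_two_mem (k := 1) (by omega)
  · fin_cases i
    · show S.bracket (x 1) (y (q + 1)) ∈ F 1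
      refine h.mem_span_weight_of_mem_L1 (S.g01 _ h.x_one_mem_L0 _ (h.y_mem_L1 (by omega) q.isLt))
        fun p hp hp1 => ?_
      obtain rfl : p = 1 := by omega
      exact hc _ (by omega) q.isLt
    · show S.bracket (x 2) (y (q + 1)) ∈ F ω
      exact h.mem_span_weight_of_mem_L1 (S.g01 _ h.x_two_mem_L0 _ (h.y_mem_L1 (by omega) q.isLt))
        fun p _ hp => hd _ (by omega) q.isLt p hp
  · fin_cases j
    · show S.bracket (y (p + 1)) (x 1) ∈ F (p + 1)
      obtain hp | hp := Nat.lt_or_ge (p + 1) m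
      · rw [h.bracket_y_x_one (by omega) hp]
        exact subset_span ⟨.inr ⟨p + 1, hp⟩, Nat.lt_succ_self _, h.basis_inr _⟩
      · rw [show (p : ℕ) + 1 = m by omega, h.bracket_y_m_x_one]
        exact zero_mem _
    · rw [h.bracket_x_two]
      exact zero_mem _
  · show S.bracket (y (p + 1)) (y (q + 1)) ∈ F (p + 1)
    by_cases hp : p + 1 < ω
    · rw [h.bracket_y_y_eq_smul_x_two hyy (by omega) p.isLt (by omega) q.isLt]
      exact smul_mem _ _ (x_two_mem hp)
    · rw [hM _ _ (by omega) p.isLt (by omega) q.isLt]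
      exact zero_mem _

theorem term_eq_bot_of_weight (h : S.IsAdaptedPair 2 m x y) {ω : ℕ} (hω : 2 ≤ ω) (hωm : ω ≤ m)
    (hyy : ∀ i j, 1 ≤ i → i ≤ m → 1 ≤ j → j ≤ m → h.coordX 1 (S.bracket (y i) (y j)) = 0)
    (hc : ∀ j, 1 ≤ j → j ≤ m → h.coordY 1 (S.bracket (x 1) (y j)) = 0)
    (hd : ∀ j, 1 ≤ j → j ≤ m → ∀ p ≤ ω, h.coordY p (S.bracket (x 2) (y j)) = 0)
    (hM : ∀ i j, ω ≤ i → i ≤ m → 1 ≤ j → j ≤ m → S.bracket (y i) (y j) = 0) :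
    S.term m = ⊥ := by
  refine S.term_eq_bot_of_weight_le h.basis h.basis.span_eq (weight m ω) ?_
    (h.bracket_basis_mem_span_weight hω hyy hc hd hM) ?_
  · rintro (i | q)
    · fin_cases i
      exacts [Nat.one_pos, show 0 < ω by omega]
    · exact Nat.succ_pos q
  · rintro (i | q)
    · fin_cases i
      exacts [show 1 ≤ m by omega, hωm]
    · exact q.isLt

end LeibnizSuper.IsAdaptedPair

open LeibnizSuper in
theorem beta_m2_ne_zero_general {L : Type*} [AddCommGroup L] [Module ℂ L]
    (S : LeibnizSuper L) (m : ℕ) (hm : 3 ≤ m)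
    (hnil : S.HasNilindex (m + 2))
    (x y : ℕ → L) (hadapt : S.IsAdaptedPair 2 m x y)
    (βm2 : ℂ) (hβ : S.bracket (y m) (y 1) = βm2 • x 2) :
    βm2 ≠ 0 := by
  rintro rfl
  rw [zero_smul] at hβ
  have htop : S.term (m + 1) = ⊥ := hnil.2.1
  have hyy := fun i j => hadapt.coordX_one_bracket_y_y_eq_zero hm htop (i := i) (j := j)
  have hc := fun j => hadapt.coordY_one_bracket_x_one_y_eq_zero htop (j := j)
  refine hnil.2.2 m (by omega) ?_
  rcases hadapt.bracket_x_two_y_one_eq_zero_or hyy hβ with hd | hB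
  · refine hadapt.term_eq_bot_of_weight (ω := m) (by omega) le_rfl hyy hc
      (fun j hj hjm p _ => ?_) (fun i j hi him hj hjm => ?_)
    · rw [hadapt.bracket_x_two_y_eq_zero hd j hj hjm, map_zero]
    · rw [le_antisymm him hi]
      exact hadapt.bracket_y_m_y_eq_zero hyy hβ hj hjm
  · refine hadapt.term_eq_bot_of_weight le_rfl (by omega) hyy hc (fun j hj hjm p hp => ?_)
      (fun i j hi him hj hjm => hadapt.bracket_y_y_eq_zero_of_two_le hyy hB j hj hjm i hi him)
    interval_cases p
    · rfl
    · exact hadapt.coordY_one_bracket_x_two_y_eq_zero htop (by omega) j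
    · exact hadapt.coordY_two_bracket_x_two_y_eq_zero htop (by omega) hj hjm

open LeibnizSuper in
/-- In `L ∈ ZF^{2,m}` (`m ≥ 3`) of nilindex `m+2` with adapted basis and generators
`x₁, y₁`, writing `[y_m,y₁] = β_{m,2} x₂`, one has `β_{m,2} ≠ 0`. -/
theorem beta_m2_ne_zero {L : Type*} [AddCommGroup L] [Module ℂ L]
    [FiniteDimensional ℂ L] (S : LeibnizSuper L) (m : ℕ) (hm : 3 ≤ m)
    (hzf : S.ZeroFiliform 2 m) (hnil : S.HasNilindex (m + 2))
    (x y : ℕ → L) (hadapt : S.IsAdaptedPair 2 m x y)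
    (hgen : S.Generates {x 1, y 1})
    (βm2 : ℂ) (hβ : S.bracket (y m) (y 1) = βm2 • x 2) :
    βm2 ≠ 0 :=
  beta_m2_ne_zero_general S m hm hnil x y hadapt βm2 hβ
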